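/- Let 0 < a < s < n and let φ: (0,∞) → [0,∞) be nonincreasing and left-continuous with lim_{r→∞} φ(r) r^{(s-a)/n} = 0. Then ∫_0^∞ sup_{y ≤ r < ∞} (φ(r) r^{(s-a)/n}) · y^{a/n - 1} dy ≤ (C(n)/a) ∫_0^∞ φ(y) y^{s/n - 1} dy. -/

import Mathlib

open MeasureTheory Set Filter
open scoped ENNReal Topology

/-!
Put `β = (s - a) / n ≤ 1` and `p = a / n ≤ 1`. On `(r / 2, r]` both `φ` and `t ^ (β - 1)` are at
least their values at `r`, so `φ r * r ^ β ≤ 2 ∫_{r/2}^r φ t * t ^ (β - 1) dt`; hence the supremum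
over `r ≥ y` is at most `2 ∫_{y/2}^∞ φ t * t ^ (β - 1) dt`. Integrating against `y ^ (p - 1)` and
exchanging the order of integration turns the left-hand side into at most
`2 ∫ φ t * t ^ (β - 1) * (2 t) ^ p / p dt ≤ (4 n / a) ∫ φ t * t ^ (s / n - 1) dt`, as `2 ^ p ≤ 2`.
-/

lemma ENNReal.ofReal_sSup_le {S : Set ℝ} {c : ℝ≥0∞}
    (h : ∀ x ∈ S, ENNReal.ofReal x ≤ c) : ENNReal.ofReal (sSup S) ≤ c := by
  obtain rfl | hc := eq_or_ne c ⊤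
  · exact le_top
  rw [ENNReal.ofReal_le_iff_le_toReal hc]
  exact Real.sSup_le (fun x hx ↦ (ENNReal.ofReal_le_iff_le_toReal hc).1 (h x hx))
    ENNReal.toReal_nonneg

lemma setLIntegral_Ioo_zero_rpow_sub_one {b p : ℝ} (hb : 0 ≤ b) (hp : 0 < p) :
    ∫⁻ y in Ioo 0 b, ENNReal.ofReal (y ^ (p - 1)) = ENNReal.ofReal (b ^ p / p) := by
  have hp' : -1 < p - 1 := by linarith
  rw [setLIntegral_congr Ioo_ae_eq_Ioc, ← ofReal_integral_eq_lintegral_ofReal,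
    ← intervalIntegral.integral_of_le hb, integral_rpow (Or.inl hp'), sub_add_cancel,
    Real.zero_rpow hp.ne', sub_zero]
  · exact (intervalIntegrable_iff_integrableOn_Ioc_of_le hb).mp
      (intervalIntegral.intervalIntegrable_rpow' hp')
  · filter_upwards [ae_restrict_mem measurableSet_Ioc] with y hy
    exact Real.rpow_nonneg hy.1.le _

lemma lintegral_rpow_mul_setLIntegral_Ioi_div {g : ℝ → ℝ≥0∞}
    (hg : AEMeasurable g (volume.restrict (Ioi 0))) {p c : ℝ} (hp : 0 < p) (hc : 0 < c) :
    ∫⁻ y in Ioi 0, ENNReal.ofReal (y ^ (p - 1)) * ∫⁻ t in Ioi (y / c), g t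
      = ∫⁻ t in Ioi 0, ENNReal.ofReal ((c * t) ^ p / p) * g t := by
  set F : ℝ → ℝ → ℝ≥0∞ := fun y t ↦ {q : ℝ × ℝ | q.1 < c * q.2}.indicator
    (fun q ↦ ENNReal.ofReal (q.1 ^ (p - 1)) * g q.2) (y, t)
  have hF : AEMeasurable (Function.uncurry F)
      ((volume.restrict (Ioi 0)).prod (volume.restrict (Ioi 0))) := by
    refine AEMeasurable.indicator ?_
      (measurableSet_lt measurable_fst (measurable_snd.const_mul c))
    exact (((by fun_prop : Measurable fun y : ℝ ↦ y ^ (p - 1)).comp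
      measurable_fst).ennreal_ofReal).aemeasurable.mul hg.comp_snd
  have h_inner_y : ∀ y ∈ Ioi (0 : ℝ),
      ENNReal.ofReal (y ^ (p - 1)) * ∫⁻ t in Ioi (y / c), g t = ∫⁻ t in Ioi 0, F y t := by
    intro y hy
    have hyc : 0 ≤ y / c := (div_pos hy hc).le
    rw [← inter_eq_left.2 (Ioi_subset_Ioi hyc), ← setLIntegral_indicator measurableSet_Ioi,
      ← lintegral_const_mul' _ _ ENNReal.ofReal_ne_top]
    refine lintegral_congr fun t ↦ ?_
    simp [F, indicator, div_lt_iff₀ hc, mul_comm]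
  have h_inner_t : ∀ t ∈ Ioi (0 : ℝ), ∫⁻ y in Ioi 0, F y t
      = ENNReal.ofReal ((c * t) ^ p / p) * g t := by
    intro t ht
    have h_rpow : Measurable fun y : ℝ ↦ ENNReal.ofReal (y ^ (p - 1)) := by fun_prop
    have hF_t :
        (F · t) = fun y ↦ (Iio (c * t)).indicator (ENNReal.ofReal <| · ^ (p - 1)) y * g t := by
      ext y
      simp [F, indicator]
    rw [hF_t, lintegral_mul_const _ (h_rpow.indicator measurableSet_Iio),
      setLIntegral_indicator measurableSet_Iio, Iio_inter_Ioi,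
      setLIntegral_Ioo_zero_rpow_sub_one (mul_pos hc ht).le hp]
  calc _ = ∫⁻ y in Ioi 0, ∫⁻ t in Ioi 0, F y t :=
        setLIntegral_congr_fun measurableSet_Ioi h_inner_y
    _ = ∫⁻ t in Ioi 0, ∫⁻ y in Ioi 0, F y t := lintegral_lintegral_swap hF
    _ = _ := setLIntegral_congr_fun measurableSet_Ioi h_inner_t

section Antitone

variable {φ : ℝ → ℝ} {β : ℝ}

lemma ofReal_mul_rpow_le_two_mul_setLIntegral_Ioc (hmono : AntitoneOn φ (Ioi 0)) (hβ : β ≤ 1)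
    {r : ℝ} (hr : 0 < r) (hφr : 0 ≤ φ r) :
    ENNReal.ofReal (φ r * r ^ β)
      ≤ 2 * ∫⁻ t in Ioc (r / 2) r, ENNReal.ofReal (φ t * t ^ (β - 1)) := by
  have h_pointwise : ∀ t ∈ Ioc (r / 2) r,
      ENNReal.ofReal (φ r * r ^ (β - 1)) ≤ ENNReal.ofReal (φ t * t ^ (β - 1)) := by
    rintro t ⟨ht_gt, ht_le⟩
    have ht : 0 < t := by linarith
    have hφ : φ r ≤ φ t := hmono ht hr ht_le
    exact ENNReal.ofReal_le_ofReal <| mul_le_mul hφ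
      (Real.rpow_le_rpow_of_nonpos ht ht_le (by linarith)) (Real.rpow_nonneg hr.le _) (hφr.trans hφ)
  calc ENNReal.ofReal (φ r * r ^ β)
      = 2 * (ENNReal.ofReal (φ r * r ^ (β - 1)) * volume (Ioc (r / 2) r)) := by
        rw [Real.volume_Ioc, ← ENNReal.ofReal_mul (by positivity), ← ENNReal.ofReal_ofNat 2,
          ← ENNReal.ofReal_mul zero_le_two, Real.rpow_sub_one hr.ne']
        congr 1
        field_simp
        ring
    _ = 2 * ∫⁻ _ in Ioc (r / 2) r, ENNReal.ofReal (φ r * r ^ (β - 1)) := by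
        rw [setLIntegral_const]
    _ ≤ 2 * ∫⁻ t in Ioc (r / 2) r, ENNReal.ofReal (φ t * t ^ (β - 1)) := by
        gcongr 2 * ?_
        exact setLIntegral_mono' measurableSet_Ioc h_pointwise

lemma ofReal_sSup_mul_rpow_image_Ici_le (hφ0 : ∀ y ∈ Ioi (0 : ℝ), 0 ≤ φ y)
    (hmono : AntitoneOn φ (Ioi 0)) (hβ : β ≤ 1) {y : ℝ} (hy : 0 < y) :
    ENNReal.ofReal (sSup ((fun r ↦ φ r * r ^ β) '' Ici y))
      ≤ 2 * ∫⁻ t in Ioi (y / 2), ENNReal.ofReal (φ t * t ^ (β - 1)) := by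
  refine ENNReal.ofReal_sSup_le ?_
  rintro _ ⟨r, hr, rfl⟩
  have hr0 : 0 < r := hy.trans_le hr
  refine (ofReal_mul_rpow_le_two_mul_setLIntegral_Ioc hmono hβ hr0 (hφ0 r hr0)).trans ?_
  gcongr 2 * ?_
  exact lintegral_mono_set fun t ht ↦ (div_le_div_of_nonneg_right hr zero_le_two).trans_lt ht.1

end Antitone

lemma two_mul_rpow_div_mul_le {p t x : ℝ} (hp : 0 < p) (hp1 : p ≤ 1) (ht : 0 < t) (hx : 0 ≤ x)
    (q : ℝ) : (2 * t) ^ p / p * (x * t ^ q) ≤ 2 / p * (x * t ^ (p + q)) := by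
  have h_two : (2 : ℝ) ^ p ≤ 2 := by
    simpa using Real.rpow_le_rpow_of_exponent_le one_le_two hp1
  rw [Real.mul_rpow zero_le_two ht.le, Real.rpow_add ht]
  have h_nonneg : 0 ≤ x * (t ^ p * t ^ q) / p := by positivity
  calc 2 ^ p * t ^ p / p * (x * t ^ q) = 2 ^ p * (x * (t ^ p * t ^ q) / p) := by ring
    _ ≤ 2 * (x * (t ^ p * t ^ q) / p) := by gcongr
    _ = 2 / p * (x * (t ^ p * t ^ q)) := by ring

theorem statement10 (n : ℕ) (hn : 0 < n) :
    ∃ C : ℝ, 0 < C ∧ ∀ a s : ℝ, 0 < a → a < s → s < n →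
      ∀ φ : ℝ → ℝ,
        (∀ y ∈ Ioi (0 : ℝ), 0 ≤ φ y) →
        AntitoneOn φ (Ioi (0 : ℝ)) →
        (∀ x ∈ Ioi (0 : ℝ), ContinuousWithinAt φ (Iio x) x) →
        Tendsto (fun r : ℝ => φ r * r ^ ((s - a) / n)) atTop (𝓝 0) →
        ∫⁻ y in Ioi (0 : ℝ),
            ENNReal.ofReal
              (sSup ((fun r : ℝ => φ r * r ^ ((s - a) / n)) '' Ici y) * y ^ (a / n - 1))
          ≤ ENNReal.ofReal (C / a) *
              ∫⁻ y in Ioi (0 : ℝ), ENNReal.ofReal (φ y * y ^ (s / n - 1)) := by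
  refine ⟨4 * n, by positivity, fun a s ha _ hsn φ hφ0 hmono _ _ ↦ ?_⟩
  have hn' : (0 : ℝ) < n := by exact_mod_cast hn
  set p := a / n with hp_def
  set β := (s - a) / n with hβ_def
  have hp : 0 < p := div_pos ha hn'
  have hp1 : p ≤ 1 := by rw [div_le_one hn']; linarith
  have hβ1 : β ≤ 1 := by rw [div_le_one hn']; linarith
  have h_exp : s / n - 1 = p + (β - 1) := by rw [hp_def, hβ_def]; field_simp; ring
  have hg : AEMeasurable (fun t ↦ ENNReal.ofReal (φ t * t ^ (β - 1))) (volume.restrict (Ioi 0)) :=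
    ((aemeasurable_restrict_of_antitoneOn measurableSet_Ioi hmono).mul
      (by fun_prop : Measurable fun t : ℝ ↦ t ^ (β - 1)).aemeasurable).ennreal_ofReal
  calc _ ≤ ∫⁻ y in Ioi 0, 2 * (ENNReal.ofReal (y ^ (p - 1)) *
          ∫⁻ t in Ioi (y / 2), ENNReal.ofReal (φ t * t ^ (β - 1))) := by
        refine setLIntegral_mono' measurableSet_Ioi fun y hy ↦ ?_
        rw [ENNReal.ofReal_mul' (Real.rpow_nonneg hy.le _), mul_left_comm, mul_comm]
        gcongr
        exact ofReal_sSup_mul_rpow_image_Ici_le hφ0 hmono hβ1 hy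
    _ = 2 * ∫⁻ t in Ioi 0,
          ENNReal.ofReal ((2 * t) ^ p / p) * ENNReal.ofReal (φ t * t ^ (β - 1)) := by
        rw [lintegral_const_mul' 2 _ (by simp),
          lintegral_rpow_mul_setLIntegral_Ioi_div hg hp two_pos]
    _ ≤ 2 * ∫⁻ t in Ioi 0, ENNReal.ofReal (2 / p) * ENNReal.ofReal (φ t * t ^ (s / n - 1)) := by
        gcongr 2 * ?_
        refine setLIntegral_mono' measurableSet_Ioi fun t ht ↦ ?_
        have ht' : 0 < t := ht
        rw [← ENNReal.ofReal_mul (by positivity), ← ENNReal.ofReal_mul (by positivity), h_exp]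
        exact ENNReal.ofReal_le_ofReal (two_mul_rpow_div_mul_le hp hp1 ht (hφ0 t ht) _)
    _ = _ := by
        rw [lintegral_const_mul' _ _ ENNReal.ofReal_ne_top, ← mul_assoc, ← ENNReal.ofReal_ofNat 2,
          ← ENNReal.ofReal_mul zero_le_two, hp_def]
        congr 2
        field_simp
        ring
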